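/- arXiv:2409.04887 — 3 statements merged into one kernel-verified Lean document; each statement's English description precedes it below -/
import Mathlib

section
/- Compactness for lattice-based propositional logic: let Γ ∪ {φ₀} be a set of 𝓛-formulas such that for every finite Γ' ⊆ Γ there exist a polarity-based model M' and an object a' of M' with M',a' ⊩ γ for all γ ∈ Γ' and M',a' ⊮ φ₀. Then there exist a polarity-based model M and an object a of M with M,a ⊩ γ for all γ ∈ Γ and M,a ⊮ φ₀. The analogous statement holds for features and the co-satisfaction relation ≻. -/
namespace DR

/-- Formulas of the lattice-based language 𝓛: variables, ⊥, ⊤, ∧, ∨. -/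
inductive Fm : Type where
  | var : ℕ → Fm
  | bot : Fm
  | top : Fm
  | and : Fm → Fm → Fm
  | or  : Fm → Fm → Fm

/-- A polarity (formal context) (A, X, I). -/
structure Polarity : Type 1 where
  Obj : Type
  Feat : Type
  I : Obj → Feat → Prop

namespace Polarity

variable (P : Polarity)

def up (B : Set P.Obj) : Set P.Feat := {x | ∀ b ∈ B, P.I b x}
def dn (Y : Set P.Feat) : Set P.Obj := {a | ∀ y ∈ Y, P.I a y}

lemma subset_dn_up (B : Set P.Obj) : B ⊆ P.dn (P.up B) :=
  fun _ ha _ hx => hx _ ha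

lemma subset_up_dn (Y : Set P.Feat) : Y ⊆ P.up (P.dn Y) :=
  fun _ hx _ ha => ha _ hx

lemma up_anti {B C : Set P.Obj} (h : B ⊆ C) : P.up C ⊆ P.up B :=
  fun _ hx b hb => hx b (h hb)

lemma dn_anti {Y Z : Set P.Feat} (h : Y ⊆ Z) : P.dn Z ⊆ P.dn Y :=
  fun _ ha y hy => ha y (h hy)

end Polarity

/-- A formal concept of a polarity: a Galois-stable pair (extension, intension). -/
structure Concept (P : Polarity) : Type where
  ext : Set P.Obj
  int : Set P.Feat
  up_ext : P.up ext = int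
  dn_int : P.dn int = ext

namespace Concept

variable {P : Polarity}

/-- Lattice meet of concepts: extensions intersect. -/
def meet (c d : Concept P) : Concept P where
  ext := c.ext ∩ d.ext
  int := P.up (c.ext ∩ d.ext)
  up_ext := rfl
  dn_int := by
    apply Set.Subset.antisymm
    · intro a ha
      constructor
      · rw [← c.dn_int]
        intro y hy
        apply ha
        rw [← c.up_ext] at hy
        exact P.up_anti Set.inter_subset_left hy
      · rw [← d.dn_int]
        intro y hy
        apply ha
        rw [← d.up_ext] at hy
        exact P.up_anti Set.inter_subset_right hy
    · exact P.subset_dn_up _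

/-- Lattice join of concepts: intensions intersect. -/
def join (c d : Concept P) : Concept P where
  ext := P.dn (c.int ∩ d.int)
  int := c.int ∩ d.int
  up_ext := by
    apply Set.Subset.antisymm
    · intro x hx
      constructor
      · rw [← c.up_ext]
        intro b hb
        apply hx
        rw [← c.dn_int] at hb
        exact P.dn_anti Set.inter_subset_left hb
      · rw [← d.up_ext]
        intro b hb
        apply hx
        rw [← d.dn_int] at hb
        exact P.dn_anti Set.inter_subset_right hb
    · exact P.subset_up_dn _
  dn_int := rfl

/-- The greatest concept. -/
def top (P : Polarity) : Concept P where
  ext := Set.univ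
  int := P.up Set.univ
  up_ext := rfl
  dn_int := Set.eq_univ_of_univ_subset (P.subset_dn_up _)

/-- The least concept. -/
def bot (P : Polarity) : Concept P where
  ext := P.dn Set.univ
  int := Set.univ
  up_ext := Set.eq_univ_of_univ_subset (P.subset_up_dn _)
  dn_int := rfl

end Concept

/-- A polarity-based model: a polarity with a valuation of variables into concepts. -/
structure Model : Type 1 where
  P : Polarity
  V : ℕ → Concept P

namespace Model

/-- Homomorphic extension of the valuation to all formulas. -/
def interp (M : Model) : Fm → Concept M.P
  | .var n => M.V n
  | .bot => Concept.bot M.P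
  | .top => Concept.top M.P
  | .and φ ψ => Concept.meet (M.interp φ) (M.interp ψ)
  | .or φ ψ => Concept.join (M.interp φ) (M.interp ψ)

/-- M, a ⊩ φ : the object a is in the extension of φ. -/
def objSat (M : Model) (a : M.P.Obj) (φ : Fm) : Prop := a ∈ (M.interp φ).ext

/-- M, x ≻ φ : the feature x is in the intension of φ. -/
def featSat (M : Model) (x : M.P.Feat) (φ : Fm) : Prop := x ∈ (M.interp φ).int

end Model

/-- Validity of the sequent φ ⊢ ψ: in every polarity-based model the
extension of φ is contained in the extension of ψ. -/
def SeqValid (φ ψ : Fm) : Prop :=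
  ∀ M : Model, (M.interp φ).ext ⊆ (M.interp ψ).ext

/-- A conceptual cumulative consequence relation: reflexive and closed
under (LLE), (RW), (CM) and (Cut). -/
structure IsCumulative (R : Fm → Fm → Prop) : Prop where
  refl : ∀ φ, R φ φ
  lle : ∀ φ ψ χ, SeqValid φ ψ → SeqValid ψ φ → R φ χ → R ψ χ
  rw : ∀ φ ψ χ, SeqValid φ ψ → R χ φ → R χ ψ
  cm : ∀ φ ψ χ, R φ ψ → R φ χ → R (Fm.and φ ψ) χ
  cut : ∀ φ ψ χ, R (Fm.and φ ψ) χ → R φ ψ → R φ χ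

/-- Closure under the rule (Loop). -/
def LoopClosed (R : Fm → Fm → Prop) : Prop :=
  ∀ (n : ℕ) (φ : ℕ → Fm),
    (∀ i < n, R (φ i) (φ (i + 1))) → R (φ n) (φ 0) → R (φ 0) (φ n)

/-- A pointed polarity-based model. -/
structure PointedModel : Type 1 where
  M : Model
  pt : M.P.Obj

/-- Satisfaction at a pointed model. -/
def PointedModel.sat (Ma : PointedModel) (φ : Fm) : Prop := Ma.M.objSat Ma.pt φ

/-- A pointed model is normal for φ iff it satisfies every plausible consequence of φ. -/
def NormalFor (R : Fm → Fm → Prop) (Ma : PointedModel) (φ : Fm) : Prop :=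
  ∀ ψ, R φ ψ → Ma.sat ψ

/-- A pointed model is supernormal for φ. -/
def SupernormalFor (R : Fm → Fm → Prop) (Ma : PointedModel) (φ : Fm) : Prop :=
  ∀ ψ, R φ ψ ↔ Ma.sat ψ

/-- A frame (S, l, ≺): states labelled by sets of pointed polarity-based
models with a preference relation. -/
structure Frame : Type 2 where
  S : Type
  l : S → Set PointedModel
  prec : S → S → Prop

/-- t is minimal in P (w.r.t. prec). -/
def MinimalIn {α : Type _} (prec : α → α → Prop) (P : Set α) (t : α) : Prop :=
  t ∈ P ∧ ∀ s ∈ P, ¬ prec s t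

/-- t is a minimum of P (w.r.t. prec). -/
def IsMinimum {α : Type _} (prec : α → α → Prop) (P : Set α) (t : α) : Prop :=
  t ∈ P ∧ ∀ s ∈ P, s ≠ t → prec t s

/-- P is smooth (w.r.t. prec). -/
def Smooth {α : Type _} (prec : α → α → Prop) (P : Set α) : Prop :=
  ∀ t ∈ P, MinimalIn prec P t ∨ ∃ s, MinimalIn prec P s ∧ prec s t

namespace Frame

/-- s ⊨ φ : every pointed model in l(s) satisfies φ. -/
def stateSat (F : Frame) (s : F.S) (φ : Fm) : Prop :=
  ∀ Ma ∈ F.l s, Ma.sat φ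

/-- φ̂ : the set of states satisfying φ. -/
def hat (F : Frame) (φ : Fm) : Set F.S := {s | F.stateSat s φ}

/-- A conceptual cumulative model: φ̂ is smooth for every φ. -/
def IsCumulativeModel (F : Frame) : Prop :=
  ∀ φ : Fm, Smooth F.prec (F.hat φ)

/-- The consequence relation |~_𝓜 defined by a frame: every state minimal
in φ̂ belongs to ψ̂. -/
def conseq (F : Frame) (φ ψ : Fm) : Prop :=
  ∀ s, MinimalIn F.prec (F.hat φ) s → s ∈ F.hat ψ

/-- Replace the preference relation of a frame. -/
def withPrec (F : Frame) (p : F.S → F.S → Prop) : Frame := ⟨F.S, F.l, p⟩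

end Frame

/-- The equivalence class φ/∼ of φ under ∼ (φ ∼ ψ iff φ |~ ψ and ψ |~ φ). -/
def cls (R : Fm → Fm → Prop) (φ : Fm) : Set Fm := {ψ | R φ ψ ∧ R ψ φ}

/-- φ/∼ ≤ ψ/∼ : there is χ ∈ φ/∼ with ψ |~ χ (ψ any representative of ψ/∼). -/
def clsLE (R : Fm → Fm → Prop) (C D : Set Fm) : Prop :=
  ∃ χ ∈ C, ∃ ψ ∈ D, R ψ χ

/-- The canonical model of a consequence relation: states are the
equivalence classes φ/∼, labelled by the normal pointed models for φ,
with φ/∼ ≺ ψ/∼ iff φ/∼ ≤ ψ/∼ and φ/∼ ≠ ψ/∼. -/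
def canonicalFrame (R : Fm → Fm → Prop) : Frame where
  S := {C : Set Fm // ∃ φ, C = cls R φ}
  l := fun s => {Ma | ∃ φ, s.val = cls R φ ∧ NormalFor R Ma φ}
  prec := fun s t => clsLE R s.val t.val ∧ s ≠ t

/-- The state φ/∼ of the canonical model. -/
def canonicalState (R : Fm → Fm → Prop) (φ : Fm) : (canonicalFrame R).S :=
  ⟨cls R φ, φ, rfl⟩


/-!
Semantic consequence is compact. In the canonical model whose objects are the filters of
formulas (sets containing `⊤`, closed under `∧` and under valid sequents) and whose features
are formulas, an object satisfies exactly the formulas it contains. The formulas entailed by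
finite subsets of `Γ` form a filter, so if `Γ` entails `φ₀` then this filter contains `φ₀`,
i.e. some finite subset of `Γ` already entails it. The statement for features follows by
duality: swapping objects with features and `∧`, `⊤` with `∨`, `⊥` turns co-satisfaction
into satisfaction.
-/

namespace Concept

variable {P : Polarity}

lemma eq_of_ext_eq {c d : Concept P} (h : c.ext = d.ext) : c = d := by
  obtain ⟨e, i, rfl, _⟩ := c
  obtain ⟨e', i', rfl, _⟩ := d
  cases h
  rfl

lemma rel_of_mem {c : Concept P} {a : P.Obj} {x : P.Feat} (ha : a ∈ c.ext) (hx : x ∈ c.int) :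
    P.I a x := by
  rw [← c.up_ext] at hx
  exact hx a ha

lemma mem_ext_of_forall_rel {c : Concept P} {a : P.Obj} (h : ∀ x ∈ c.int, P.I a x) :
    a ∈ c.ext :=
  c.dn_int ▸ h

lemma int_subset_int_of_ext_subset {c d : Concept P} (h : c.ext ⊆ d.ext) : d.int ⊆ c.int := by
  rw [← c.up_ext, ← d.up_ext]
  exact P.up_anti h

end Concept

namespace SeqValid

lemma refl (φ : Fm) : SeqValid φ φ := fun _ => subset_rfl

lemma trans {φ ψ χ : Fm} (h₁ : SeqValid φ ψ) (h₂ : SeqValid ψ χ) : SeqValid φ χ :=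
  fun M => (h₁ M).trans (h₂ M)

lemma top (φ : Fm) : SeqValid φ Fm.top := fun _ _ _ => trivial

lemma bot (φ : Fm) : SeqValid Fm.bot φ :=
  fun _ _ ha => Concept.mem_ext_of_forall_rel fun x _ => ha x trivial

lemma and_left (φ ψ : Fm) : SeqValid (φ.and ψ) φ := fun _ _ ha => ha.1

lemma and_right (φ ψ : Fm) : SeqValid (φ.and ψ) ψ := fun _ _ ha => ha.2

lemma and_intro {φ ψ χ : Fm} (h₁ : SeqValid φ ψ) (h₂ : SeqValid φ χ) :
    SeqValid φ (ψ.and χ) :=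
  fun M _ ha => ⟨h₁ M ha, h₂ M ha⟩

lemma or_left (φ ψ : Fm) : SeqValid φ (φ.or ψ) :=
  fun _ _ ha _ hx => Concept.rel_of_mem ha hx.1

lemma or_right (φ ψ : Fm) : SeqValid ψ (φ.or ψ) :=
  fun _ _ ha _ hx => Concept.rel_of_mem ha hx.2

lemma or_elim {φ ψ χ : Fm} (h₁ : SeqValid φ χ) (h₂ : SeqValid ψ χ) : SeqValid (φ.or ψ) χ :=
  fun M _ ha => Concept.mem_ext_of_forall_rel fun _ hx =>
    ha _ ⟨Concept.int_subset_int_of_ext_subset (h₁ M) hx,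
      Concept.int_subset_int_of_ext_subset (h₂ M) hx⟩

end SeqValid

structure IsFilter (F : Set Fm) : Prop where
  top_mem : Fm.top ∈ F
  and_mem {φ ψ : Fm} : φ ∈ F → ψ ∈ F → φ.and ψ ∈ F
  mem_of_seqValid {φ ψ : Fm} : φ ∈ F → SeqValid φ ψ → ψ ∈ F

lemma isFilter_principal (φ : Fm) : IsFilter {ψ | SeqValid φ ψ} where
  top_mem := SeqValid.top φ
  and_mem := SeqValid.and_intro
  mem_of_seqValid := SeqValid.trans

def filterPolarity : Polarity := ⟨{F : Set Fm // IsFilter F}, Fm, fun F ψ => ψ ∈ F.val⟩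

def filterConcept (φ : Fm) : Concept filterPolarity where
  ext := {F | φ ∈ F.val}
  int := {ψ | SeqValid φ ψ}
  up_ext := Set.Subset.antisymm
    (fun _ hψ => hψ ⟨_, isFilter_principal φ⟩ (SeqValid.refl φ))
    (fun _ hψ F hF => F.2.mem_of_seqValid hF hψ)
  dn_int := Set.Subset.antisymm
    (fun _ hF => hF φ (SeqValid.refl φ))
    (fun F hF _ hψ => F.2.mem_of_seqValid hF hψ)

def filterModel : Model := ⟨filterPolarity, fun n => filterConcept (.var n)⟩

lemma filterModel_interp (φ : Fm) : filterModel.interp φ = filterConcept φ := by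
  induction φ with
  | var n => rfl
  | bot =>
    refine Concept.eq_of_ext_eq (Set.Subset.antisymm (fun F hF => hF Fm.bot trivial) ?_)
    exact fun F hF ψ _ => F.2.mem_of_seqValid hF (SeqValid.bot ψ)
  | top => exact Concept.eq_of_ext_eq (Set.eq_univ_of_forall fun F => F.2.top_mem).symm
  | and φ ψ ihφ ihψ =>
    refine Concept.eq_of_ext_eq ?_
    change (Concept.meet (filterModel.interp φ) (filterModel.interp ψ)).ext = _
    rw [ihφ, ihψ]
    exact Set.Subset.antisymm (fun F hF => F.2.and_mem hF.1 hF.2) fun F hF =>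
      ⟨F.2.mem_of_seqValid hF (SeqValid.and_left φ ψ),
        F.2.mem_of_seqValid hF (SeqValid.and_right φ ψ)⟩
  | or φ ψ ihφ ihψ =>
    refine Concept.eq_of_ext_eq ?_
    change (Concept.join (filterModel.interp φ) (filterModel.interp ψ)).ext = _
    rw [ihφ, ihψ]
    exact Set.Subset.antisymm (fun F hF => hF _ ⟨SeqValid.or_left φ ψ, SeqValid.or_right φ ψ⟩)
      fun F hF χ hχ => F.2.mem_of_seqValid hF (SeqValid.or_elim hχ.1 hχ.2)

lemma filterModel_objSat_iff (F : filterPolarity.Obj) (φ : Fm) :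
    filterModel.objSat F φ ↔ φ ∈ F.val := by
  unfold Model.objSat
  rw [filterModel_interp]
  rfl

def Entails (Γ : Set Fm) (φ : Fm) : Prop :=
  ∀ (M : Model) (a : M.P.Obj), (∀ γ ∈ Γ, M.objSat a γ) → M.objSat a φ

def FeatEntails (Γ : Set Fm) (φ : Fm) : Prop :=
  ∀ (M : Model) (x : M.P.Feat), (∀ γ ∈ Γ, M.featSat x γ) → M.featSat x φ

lemma not_entails_iff {Γ : Set Fm} {φ : Fm} :
    ¬ Entails Γ φ ↔ ∃ (M : Model) (a : M.P.Obj), (∀ γ ∈ Γ, M.objSat a γ) ∧ ¬ M.objSat a φ := by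
  simp only [Entails, not_forall, exists_prop]

lemma not_featEntails_iff {Γ : Set Fm} {φ : Fm} :
    ¬ FeatEntails Γ φ ↔
      ∃ (M : Model) (x : M.P.Feat), (∀ γ ∈ Γ, M.featSat x γ) ∧ ¬ M.featSat x φ := by
  simp only [FeatEntails, not_forall, exists_prop]

def finiteConsequences (Γ : Set Fm) : Set Fm := {φ | ∃ Δ ⊆ Γ, Δ.Finite ∧ Entails Δ φ}

lemma isFilter_finiteConsequences (Γ : Set Fm) : IsFilter (finiteConsequences Γ) where
  top_mem := ⟨∅, Set.empty_subset Γ, Set.finite_empty, fun _ _ _ => trivial⟩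
  and_mem := by
    rintro φ ψ ⟨Δ₁, hΔ₁Γ, hΔ₁, h₁⟩ ⟨Δ₂, hΔ₂Γ, hΔ₂, h₂⟩
    refine ⟨Δ₁ ∪ Δ₂, Set.union_subset hΔ₁Γ hΔ₂Γ, hΔ₁.union hΔ₂, fun M a ha => ⟨?_, ?_⟩⟩
    · exact h₁ M a fun γ hγ => ha γ (Or.inl hγ)
    · exact h₂ M a fun γ hγ => ha γ (Or.inr hγ)
  mem_of_seqValid := by
    rintro φ ψ ⟨Δ, hΔΓ, hΔ, h⟩ hφψ
    exact ⟨Δ, hΔΓ, hΔ, fun M a ha => hφψ M (h M a ha)⟩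

theorem Entails.exists_finite {Γ : Set Fm} {φ : Fm} (h : Entails Γ φ) :
    ∃ Δ ⊆ Γ, Δ.Finite ∧ Entails Δ φ := by
  let F : filterPolarity.Obj := ⟨finiteConsequences Γ, isFilter_finiteConsequences Γ⟩
  have hΓF : ∀ γ ∈ Γ, filterModel.objSat F γ := fun γ hγ =>
    (filterModel_objSat_iff F γ).2
      ⟨{γ}, Set.singleton_subset_iff.2 hγ, Set.finite_singleton γ, fun _ _ ha => ha γ rfl⟩
  exact (filterModel_objSat_iff F φ).1 (h filterModel F hΓF)

def Fm.dual : Fm → Fm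
  | .var n => .var n
  | .bot => .top
  | .top => .bot
  | .and φ ψ => .or φ.dual ψ.dual
  | .or φ ψ => .and φ.dual ψ.dual

@[simp]
lemma Fm.dual_dual (φ : Fm) : φ.dual.dual = φ := by
  induction φ <;> simp [Fm.dual, *]

def Polarity.dual (P : Polarity) : Polarity := ⟨P.Feat, P.Obj, fun x a => P.I a x⟩

def Concept.dual {P : Polarity} (c : Concept P) : Concept P.dual :=
  ⟨c.int, c.ext, c.dn_int, c.up_ext⟩

def Model.dual (M : Model) : Model := ⟨M.P.dual, fun n => (M.V n).dual⟩

lemma Model.dual_interp_dual (M : Model) (φ : Fm) :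
    M.dual.interp φ.dual = (M.interp φ).dual := by
  induction φ with
  | var n => rfl
  | bot => exact Concept.eq_of_ext_eq rfl
  | top => exact Concept.eq_of_ext_eq rfl
  | and φ ψ ihφ ihψ =>
    refine Concept.eq_of_ext_eq ?_
    change (Concept.join (M.dual.interp φ.dual) (M.dual.interp ψ.dual)).ext = _
    rw [ihφ, ihψ]
    rfl
  | or φ ψ ihφ ihψ =>
    refine Concept.eq_of_ext_eq ?_
    change (Concept.meet (M.dual.interp φ.dual) (M.dual.interp ψ.dual)).ext = _
    rw [ihφ, ihψ]
    rfl

lemma Model.dual_objSat_dual_iff (M : Model) (x : M.P.Feat) (φ : Fm) :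
    M.dual.objSat x φ.dual ↔ M.featSat x φ := by
  unfold Model.objSat Model.featSat
  rw [M.dual_interp_dual]
  rfl

lemma featEntails_iff_entails_dual {Γ : Set Fm} {φ : Fm} :
    FeatEntails Γ φ ↔ Entails (Fm.dual '' Γ) φ.dual := by
  constructor
  · intro h M a ha
    -- `M.dual.dual` is `M` up to definitional unfolding
    refine (M.dual.dual_objSat_dual_iff a φ).2 (h M.dual a fun γ hγ => ?_)
    exact (M.dual.dual_objSat_dual_iff a γ).1 (ha _ ⟨γ, hγ, rfl⟩)
  · intro h M x hx
    refine (M.dual_objSat_dual_iff x φ).1 (h M.dual x ?_)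
    rintro _ ⟨γ, hγ, rfl⟩
    exact (M.dual_objSat_dual_iff x γ).2 (hx γ hγ)

theorem FeatEntails.exists_finite {Γ : Set Fm} {φ : Fm} (h : FeatEntails Γ φ) :
    ∃ Δ ⊆ Γ, Δ.Finite ∧ FeatEntails Δ φ := by
  obtain ⟨Δ, hΔΓ, hΔ, hΔφ⟩ := (featEntails_iff_entails_dual.1 h).exists_finite
  refine ⟨Fm.dual '' Δ, ?_, hΔ.image _, featEntails_iff_entails_dual.2 ?_⟩
  · rintro _ ⟨δ, hδ, rfl⟩
    obtain ⟨γ, hγ, rfl⟩ := hΔΓ hδ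
    rwa [Fm.dual_dual]
  · rwa [Set.image_image, Set.image_congr' Fm.dual_dual, Set.image_id']

/-- compactness for lattice-based propositional logic,
for objects (⊩) and for features (≻). -/
theorem compactness_polarity :
    (∀ (Γ : Set Fm) (φ₀ : Fm),
      (∀ Γ' : Set Fm, Γ'.Finite → Γ' ⊆ Γ →
        ∃ (M : Model) (a : M.P.Obj), (∀ γ ∈ Γ', M.objSat a γ) ∧ ¬ M.objSat a φ₀) →
      ∃ (M : Model) (a : M.P.Obj), (∀ γ ∈ Γ, M.objSat a γ) ∧ ¬ M.objSat a φ₀)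
    ∧
    (∀ (Γ : Set Fm) (φ₀ : Fm),
      (∀ Γ' : Set Fm, Γ'.Finite → Γ' ⊆ Γ →
        ∃ (M : Model) (x : M.P.Feat), (∀ γ ∈ Γ', M.featSat x γ) ∧ ¬ M.featSat x φ₀) →
      ∃ (M : Model) (x : M.P.Feat), (∀ γ ∈ Γ, M.featSat x γ) ∧ ¬ M.featSat x φ₀) := by
  refine ⟨fun Γ φ₀ h => not_entails_iff.1 fun hΓ => ?_,
    fun Γ φ₀ h => not_featEntails_iff.1 fun hΓ => ?_⟩
  · obtain ⟨Δ, hΔΓ, hΔ, hΔφ₀⟩ := hΓ.exists_finite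
    exact not_entails_iff.2 (h Δ hΔ hΔΓ) hΔφ₀
  · obtain ⟨Δ, hΔΓ, hΔ, hΔφ₀⟩ := hΓ.exists_finite
    exact not_featEntails_iff.2 (h Δ hΔ hΔΓ) hΔφ₀

end DR
end

section
/- Soundness: for any conceptual cumulative model 𝓜, the consequence relation |~_𝓜 it defines is a conceptual cumulative consequence relation, i.e., |~_𝓜 contains φ |~ φ for every φ and is closed under the rules (LLE), (RW), (CM) and (Cut). -/
namespace DR

lemma hat_and {F : Frame} {φ ψ : Fm} {s : F.S} :
    s ∈ F.hat (Fm.and φ ψ) ↔ s ∈ F.hat φ ∧ s ∈ F.hat ψ := by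
  constructor
  · intro hs
    exact ⟨fun Ma hMa => (hs Ma hMa).1, fun Ma hMa => (hs Ma hMa).2⟩
  · intro ⟨h1, h2⟩ Ma hMa
    exact ⟨h1 Ma hMa, h2 Ma hMa⟩

lemma stateSat_mono {F : Frame} {φ ψ : Fm} (h : SeqValid φ ψ) {s : F.S}
    (hs : s ∈ F.hat φ) : s ∈ F.hat ψ :=
  fun Ma hMa => h Ma.M (hs Ma hMa)

/-- soundness: the consequence relation of any conceptual
cumulative model is a conceptual cumulative consequence relation. -/
theorem soundness (F : Frame) (h : F.IsCumulativeModel) :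
    IsCumulative F.conseq := by
  constructor
  · intro φ s hs; exact hs.1
  · intro φ ψ χ h1 h2 hr s hs
    have heq : F.hat ψ = F.hat φ :=
      Set.Subset.antisymm (fun t ht => stateSat_mono h2 ht) (fun t ht => stateSat_mono h1 ht)
    exact hr s (heq ▸ hs)
  · intro φ ψ χ h1 hr s hs
    exact stateSat_mono h1 (hr s hs)
  · intro φ ψ χ h1 h2 s hs
    have hsφ : s ∈ F.hat φ := (hat_and.mp hs.1).1
    have hmin : MinimalIn F.prec (F.hat φ) s := by
      refine ⟨hsφ, fun t ht hts => ?_⟩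
      rcases h φ s hsφ with hm | ⟨u, hu, hus⟩
      · exact hm.2 t ht hts
      · have : u ∈ F.hat (Fm.and φ ψ) := hat_and.mpr ⟨hu.1, h1 u hu⟩
        exact hs.2 u this hus
    exact h2 s hmin
  · intro φ ψ χ h1 h2 s hs
    have hsψ : s ∈ F.hat ψ := h2 s hs
    have : MinimalIn F.prec (F.hat (Fm.and φ ψ)) s := by
      refine ⟨hat_and.mpr ⟨hs.1, hsψ⟩, fun t ht => hs.2 t (hat_and.mp ht).1⟩
    exact h1 s this


end DR
end

section
/- Let |~ be a conceptual cumulative consequence relation and φ, φ' any 𝓛-formulas. Then φ ̸|~ φ' if and only if there exists a pointed polarity-based model M_a that is normal for φ and satisfies M_a ⊮ φ'. -/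
namespace DR

/-! ### Auxiliary lemmas about `SeqValid` -/

lemma seq_refl (ψ : Fm) : SeqValid ψ ψ := fun _ => subset_rfl

lemma seq_trans {α β γ : Fm} (h1 : SeqValid α β) (h2 : SeqValid β γ) :
    SeqValid α γ := fun M => (h1 M).trans (h2 M)

lemma seq_and_left (ψ χ : Fm) : SeqValid (Fm.and ψ χ) ψ :=
  fun _ _ ha => ha.1

lemma seq_and_right (ψ χ : Fm) : SeqValid (Fm.and ψ χ) χ :=
  fun _ _ ha => ha.2

lemma seq_and_intro {α ψ χ : Fm} (h1 : SeqValid α ψ) (h2 : SeqValid α χ) :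
    SeqValid α (Fm.and ψ χ) := fun M _ ha => ⟨h1 M ha, h2 M ha⟩

lemma seq_or_left (ψ χ : Fm) : SeqValid ψ (Fm.or ψ χ) := by
  intro M
  show (M.interp ψ).ext ⊆ M.P.dn ((M.interp ψ).int ∩ (M.interp χ).int)
  rw [← (M.interp ψ).dn_int]
  exact M.P.dn_anti Set.inter_subset_left

lemma seq_or_right (ψ χ : Fm) : SeqValid χ (Fm.or ψ χ) := by
  intro M
  show (M.interp χ).ext ⊆ M.P.dn ((M.interp ψ).int ∩ (M.interp χ).int)
  rw [← (M.interp χ).dn_int]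
  exact M.P.dn_anti Set.inter_subset_right

lemma seq_or_elim {ψ χ x : Fm} (h1 : SeqValid ψ x) (h2 : SeqValid χ x) :
    SeqValid (Fm.or ψ χ) x := by
  intro M
  show M.P.dn ((M.interp ψ).int ∩ (M.interp χ).int) ⊆ (M.interp x).ext
  have hx1 : (M.interp x).int ⊆ (M.interp ψ).int := by
    rw [← (M.interp x).up_ext, ← (M.interp ψ).up_ext]
    exact M.P.up_anti (h1 M)
  have hx2 : (M.interp x).int ⊆ (M.interp χ).int := by
    rw [← (M.interp x).up_ext, ← (M.interp χ).up_ext]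
    exact M.P.up_anti (h2 M)
  rw [← (M.interp x).dn_int]
  exact M.P.dn_anti (fun y hy => ⟨hx1 hy, hx2 hy⟩)

lemma seq_bot (ψ : Fm) : SeqValid Fm.bot ψ := by
  intro M a ha
  rw [← (M.interp ψ).dn_int]
  exact fun y _ => ha y trivial

lemma seq_top (ψ : Fm) : SeqValid ψ Fm.top := fun _ _ _ => trivial

/-! ### Consequences of cumulativity -/

lemma R_and {R : Fm → Fm → Prop} (h : IsCumulative R) {φ ψ χ : Fm}
    (h1 : R φ ψ) (h2 : R φ χ) : R φ (Fm.and ψ χ) := by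
  have s1 : R (Fm.and φ ψ) χ := h.cm φ ψ χ h1 h2
  have s2 : R (Fm.and (Fm.and φ ψ) χ) (Fm.and ψ χ) :=
    h.rw _ _ _
      (seq_and_intro (seq_trans (seq_and_left _ _) (seq_and_right _ _))
        (seq_and_right _ _))
      (h.refl _)
  have s3 : R (Fm.and φ ψ) (Fm.and ψ χ) := h.cut _ _ _ s2 s1
  exact h.cut _ _ _ s3 h1

/-! ### The canonical pointed model for φ -/

/-- Canonical polarity: objects are `Option Fm` (`some χ` is the principal
filter of χ, `none` is the theory of φ), features are formulas. -/
def canonP (R : Fm → Fm → Prop) (φ : Fm) : Polarity where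
  Obj := Option Fm
  Feat := Fm
  I := fun b x => b.elim (R φ x) (fun χ => SeqValid χ x)

/-- The canonical concept associated to a formula. -/
def cConcept (R : Fm → Fm → Prop) (h : IsCumulative R) (φ ψ : Fm) :
    Concept (canonP R φ) where
  ext := {b | b.elim (R φ ψ) (fun χ => SeqValid χ ψ)}
  int := {x | SeqValid ψ x}
  up_ext := by
    apply Set.Subset.antisymm
    · intro x hx
      exact hx (some ψ) (seq_refl ψ)
    · intro x hx b hb
      cases b with
      | none => exact h.rw _ _ _ hx hb
      | some χ => exact seq_trans hb hx
  dn_int := by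
    apply Set.Subset.antisymm
    · intro b hb
      exact hb ψ (seq_refl ψ)
    · intro b hb x hx
      cases b with
      | none => exact h.rw _ _ _ hx hb
      | some χ => exact seq_trans hb hx

/-- The canonical model. -/
def canonM (R : Fm → Fm → Prop) (h : IsCumulative R) (φ : Fm) : Model where
  P := canonP R φ
  V := fun n => cConcept R h φ (Fm.var n)

lemma Concept.ext_injective {P : Polarity} {c d : Concept P}
    (he : c.ext = d.ext) : c = d := by
  obtain ⟨e1, i1, u1, d1⟩ := c
  obtain ⟨e2, i2, u2, d2⟩ := d
  dsimp at he
  subst he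
  have : i1 = i2 := by rw [← u1, ← u2]
  subst this
  rfl

lemma canon_interp (R : Fm → Fm → Prop) (h : IsCumulative R) (φ : Fm) :
    ∀ ψ, (canonM R h φ).interp ψ = cConcept R h φ ψ := by
  intro ψ
  induction ψ with
  | var n => rfl
  | bot =>
    apply Concept.ext_injective
    apply Set.Subset.antisymm
    · intro b hb
      cases b with
      | none => exact hb Fm.bot trivial
      | some χ => exact hb Fm.bot trivial
    · intro b hb x _
      cases b with
      | none => exact h.rw _ _ _ (seq_bot x) hb
      | some χ => exact seq_trans hb (seq_bot x)
  | top =>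
    apply Concept.ext_injective
    apply Set.Subset.antisymm
    · intro b _
      cases b with
      | none => exact h.rw _ _ _ (seq_top φ) (h.refl φ)
      | some χ => exact seq_top χ
    · intro b _
      trivial
  | and ψ χ ihψ ihχ =>
    apply Concept.ext_injective
    show ((canonM R h φ).interp ψ).ext ∩ ((canonM R h φ).interp χ).ext = _
    rw [ihψ, ihχ]
    apply Set.Subset.antisymm
    · intro b hb
      cases b with
      | none => exact R_and h hb.1 hb.2
      | some α => exact seq_and_intro hb.1 hb.2
    · intro b hb
      cases b with
      | none =>
        exact ⟨h.rw _ _ _ (seq_and_left ψ χ) hb, h.rw _ _ _ (seq_and_right ψ χ) hb⟩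
      | some α =>
        exact ⟨seq_trans hb (seq_and_left ψ χ), seq_trans hb (seq_and_right ψ χ)⟩
  | or ψ χ ihψ ihχ =>
    apply Concept.ext_injective
    show (canonM R h φ).P.dn
        (((canonM R h φ).interp ψ).int ∩ ((canonM R h φ).interp χ).int) = _
    rw [ihψ, ihχ]
    apply Set.Subset.antisymm
    · intro b hb
      have := hb (Fm.or ψ χ) ⟨seq_or_left ψ χ, seq_or_right ψ χ⟩
      exact this
    · intro b hb x hx
      have hval : SeqValid (Fm.or ψ χ) x := seq_or_elim hx.1 hx.2
      cases b with
      | none => exact h.rw _ _ _ hval hb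
      | some α => exact seq_trans hb hval

/-- φ ̸|~ φ' iff some pointed polarity-based model normal
for φ does not satisfy φ'. -/
theorem not_conseq_iff_normal_countermodel (R : Fm → Fm → Prop)
    (h : IsCumulative R) (φ φ' : Fm) :
    ¬ R φ φ' ↔ ∃ Ma : PointedModel, NormalFor R Ma φ ∧ ¬ Ma.sat φ' := by
  constructor
  · intro hn
    refine ⟨⟨canonM R h φ, none⟩, ?_, ?_⟩
    · intro ψ hψ
      show none ∈ ((canonM R h φ).interp ψ).ext
      rw [canon_interp R h φ ψ]
      exact hψ
    · intro hs
      apply hn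
      have : none ∈ ((canonM R h φ).interp φ').ext := hs
      rw [canon_interp R h φ φ'] at this
      exact this
  · rintro ⟨Ma, hnorm, hns⟩ hR
    exact hns (hnorm φ' hR)

end DR
end
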